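/- arXiv:2008.12133 — 2 statements merged into one kernel-verified Lean document; each statement's English description precedes it below -/
import Mathlib

section
/- (Osgood lemma) Let $t_0 > 0$, let $\rho : [0, t_0] \to (0, \infty)$ be a positive Borel function, $\gamma : [0,t_0] \to [0,\infty)$ locally integrable, and $\mu : (0,\infty) \to (0,\infty)$ continuous and increasing. Assume that for some $\alpha > 0$ and all $t \in [0, t_0]$: $\rho(t) \le \alpha + \int_t^{t_0} \gamma(s) \mu(\rho(s)) ds$. Define $\mathfrak{M}(x) = \int_x^1 \frac{ds}{\mu(s)}$. Then for all $t \in [0,t_0]$: $-\mathfrak{M}(\rho(t)) + \mathfrak{M}(\alpha) \le \int_t^{t_0} \gamma(s) ds$. -/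
/-!
Put `R s = α + ∫_s^t₀ γ μ(ρ)`, so that `ρ ≤ R`, `R t₀ = α`, and `R` is continuous, decreasing
and satisfies `R a - R b ≤ μ (R a) ∫_a^b γ` for `a ≤ b`. With `P x = ∫_{R t₀}^x 1/μ`, the
monotonicity of `μ` gives, for `s < c`,
`P (R s) - P (R c) ≤ (R s - R c) / μ (R c) ≤ (μ (R s) / μ (R c)) ∫_s^c γ`,
and by continuity the ratio is below any fixed `L > 1` for `s` close enough to `c` on the left.
So `s ↦ P (R s) - L ∫_s^t₀ γ` locally decreases leftwards, and being continuous it is at `t`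
at most its value `0` at `t₀`. Letting `L → 1` and using `P (ρ t) ≤ P (R t)` gives the claim.
No derivative of `R` is ever taken, so integrability of `γ μ(ρ)` is all that is needed.
-/

open MeasureTheory intervalIntegral Set Filter Topology

theorem le_of_forall_eventually_nhdsLT_le {α β : Type*} [ConditionallyCompleteLinearOrder α]
    [TopologicalSpace α] [OrderTopology α] [DenselyOrdered α] [LinearOrder β]
    [TopologicalSpace β] [ClosedIicTopology β] {f : α → β} {a b : α} (hab : a ≤ b)
    (hf : ContinuousOn f (Icc a b)) (h : ∀ x ∈ Ioc a b, ∀ᶠ y in 𝓝[<] x, f y ≤ f x) :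
    f a ≤ f b := by
  have hs : IsClosed ({x | f x ≤ f b} ∩ Icc a b) := by
    rw [inter_comm]
    exact hf.preimage_isClosed_of_isClosed isClosed_Icc isClosed_Iic
  refine hs.mem_of_ge_of_forall_exists_lt (le_refl (f b)) hab fun x ⟨hx, hax, hxb⟩ => ?_
  have := nhdsLT_neBot_of_exists_lt ⟨a, hax⟩
  obtain ⟨y, hy, hya⟩ := ((h x ⟨hax, hxb⟩).and (Ico_mem_nhdsLT hax)).exists
  exact ⟨y, hy.trans hx, hya⟩

section OneDivIntegral

variable {μ : ℝ → ℝ}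

theorem intervalIntegrable_one_div_of_pos (hμ_pos : ∀ x > 0, 0 < μ x)
    (hμ_cont : ContinuousOn μ (Ioi 0)) {a b : ℝ} (ha : 0 < a) (hb : 0 < b) :
    IntervalIntegrable (fun x => 1 / μ x) volume a b :=
  ((continuousOn_const.div hμ_cont fun x hx => (hμ_pos x hx).ne').mono
    fun _ hx => (lt_min ha hb).trans_le hx.1).intervalIntegrable

theorem integral_one_div_mono_right (hμ_pos : ∀ x > 0, 0 < μ x)
    (hμ_cont : ContinuousOn μ (Ioi 0)) {a b c : ℝ} (ha : 0 < a) (hb : 0 < b) (hbc : b ≤ c) :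
    ∫ x in a..b, 1 / μ x ≤ ∫ x in a..c, 1 / μ x := by
  have hc : 0 < c := hb.trans_le hbc
  have hbc_nonneg : 0 ≤ ∫ x in b..c, 1 / μ x :=
    integral_nonneg hbc fun x hx => (one_div_pos.2 (hμ_pos x (hb.trans_le hx.1))).le
  have := integral_interval_sub_left (intervalIntegrable_one_div_of_pos hμ_pos hμ_cont ha hc)
    (intervalIntegrable_one_div_of_pos hμ_pos hμ_cont ha hb)
  linarith

theorem integral_one_div_le_sub_div (hμ_pos : ∀ x > 0, 0 < μ x)
    (hμ_cont : ContinuousOn μ (Ioi 0)) (hμ_mono : MonotoneOn μ (Ioi 0)) {a b : ℝ} (ha : 0 < a)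
    (hab : a ≤ b) : ∫ x in a..b, 1 / μ x ≤ (b - a) / μ a :=
  calc ∫ x in a..b, 1 / μ x ≤ ∫ _ in a..b, 1 / μ a :=
        integral_mono_on hab (intervalIntegrable_one_div_of_pos hμ_pos hμ_cont ha (ha.trans_le hab))
          intervalIntegrable_const fun x hx =>
            one_div_le_one_div_of_le (hμ_pos a ha) (hμ_mono ha (ha.trans_le hx.1) hx.1)
    _ = (b - a) / μ a := by rw [intervalIntegral.integral_const, smul_eq_mul, mul_one_div]

theorem integral_one_div_le_mul_of_sub_le (hμ_pos : ∀ x > 0, 0 < μ x)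
    (hμ_cont : ContinuousOn μ (Ioi 0)) (hμ_mono : MonotoneOn μ (Ioi 0)) {a b I L : ℝ}
    (ha : 0 < a) (hab : a ≤ b) (h : b - a ≤ μ b * I) (hμL : μ b ≤ L * μ a) :
    ∫ x in a..b, 1 / μ x ≤ L * I := by
  have hμa := hμ_pos a ha
  have hI : 0 ≤ I :=
    nonneg_of_mul_nonneg_right ((sub_nonneg.2 hab).trans h) (hμ_pos b (ha.trans_le hab))
  calc ∫ x in a..b, 1 / μ x ≤ (b - a) / μ a :=
        integral_one_div_le_sub_div hμ_pos hμ_cont hμ_mono ha hab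
    _ ≤ μ b * I / μ a := by gcongr
    _ ≤ L * μ a * I / μ a := by gcongr
    _ = L * I := by field_simp

end OneDivIntegral

theorem integral_one_div_le_mul_integral_of_sub_le_mul_integral {μ γ R : ℝ → ℝ} {t t₀ L : ℝ}
    (htt₀ : t ≤ t₀) (hμ_pos : ∀ x > 0, 0 < μ x) (hμ_cont : ContinuousOn μ (Ioi 0))
    (hμ_mono : MonotoneOn μ (Ioi 0)) (hγ : IntervalIntegrable γ volume t t₀)
    (hR_cont : ContinuousOn R (Icc t t₀)) (hR_pos : ∀ s ∈ Icc t t₀, 0 < R s)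
    (hR_anti : AntitoneOn R (Icc t t₀))
    (hR : ∀ a ∈ Icc t t₀, ∀ b ∈ Icc t t₀, a ≤ b → R a - R b ≤ μ (R a) * ∫ s in a..b, γ s)
    (hL : 1 < L) :
    ∫ x in R t₀..R t, 1 / μ x ≤ L * ∫ s in t..t₀, γ s := by
  have ht : t ∈ Icc t t₀ := left_mem_Icc.2 htt₀
  have ht₀ : t₀ ∈ Icc t t₀ := right_mem_Icc.2 htt₀
  set P : ℝ → ℝ := fun x => ∫ u in R t₀..x, 1 / μ u
  have hP_cont : ContinuousOn (fun s => P (R s)) (Icc t t₀) := by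
    have hP := continuousOn_primitive_interval'
      (intervalIntegrable_one_div_of_pos hμ_pos hμ_cont (hR_pos t₀ ht₀) (hR_pos t ht))
      left_mem_uIcc
    rw [uIcc_of_le (hR_anti ht ht₀ htt₀)] at hP
    exact hP.comp hR_cont fun s hs => ⟨hR_anti hs ht₀ hs.2, hR_anti ht hs hs.1⟩
  have hγ_cont : ContinuousOn (fun s => ∫ u in s..t₀, γ u) (Icc t t₀) := by
    simpa [uIcc_of_le htt₀] using
      continuousOn_primitive_interval_left ((intervalIntegrable_iff').1 hγ)
  have hμR_cont : ContinuousOn (fun s => μ (R s)) (Icc t t₀) := hμ_cont.comp hR_cont hR_pos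
  suffices P (R t) - L * ∫ s in t..t₀, γ s ≤ P (R t₀) - L * ∫ s in t₀..t₀, γ s by
    simpa [P] using this
  refine le_of_forall_eventually_nhdsLT_le (f := fun s => P (R s) - L * ∫ u in s..t₀, γ u)
    htt₀ (hP_cont.sub (continuousOn_const.mul hγ_cont)) fun c hc => ?_
  have hc' : c ∈ Icc t t₀ := Ioc_subset_Icc_self hc
  have hμRc := hμ_pos _ (hR_pos c hc')
  have hnear : ∀ᶠ s in 𝓝[<] c, s ∈ Ico t c ∧ μ (R s) < L * μ (R c) := by
    rw [← nhdsWithin_Ico_eq_nhdsLT hc.1]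
    exact eventually_mem_nhdsWithin.and
      (nhdsWithin_mono _ (Ico_subset_Icc_self.trans (Icc_subset_Icc_right hc.2))
        (hμR_cont c hc' (gt_mem_nhds ((lt_mul_iff_one_lt_left hμRc).2 hL))))
  filter_upwards [hnear] with s ⟨hs, hμs⟩
  have hs' : s ∈ Icc t t₀ := ⟨hs.1, hs.2.le.trans hc.2⟩
  have hPsc : P (R s) - P (R c) = ∫ x in R c..R s, 1 / μ x :=
    integral_interval_sub_left
      (intervalIntegrable_one_div_of_pos hμ_pos hμ_cont (hR_pos t₀ ht₀) (hR_pos s hs'))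
      (intervalIntegrable_one_div_of_pos hμ_pos hμ_cont (hR_pos t₀ ht₀) (hR_pos c hc'))
  have hγsc : ∫ u in s..t₀, γ u = (∫ u in s..c, γ u) + ∫ u in c..t₀, γ u :=
    (integral_add_adjacent_intervals
      (hγ.mono_set (uIcc_subset_uIcc (Icc_subset_uIcc hs') (Icc_subset_uIcc hc')))
      (hγ.mono_set (uIcc_subset_uIcc (Icc_subset_uIcc hc') (Icc_subset_uIcc ht₀)))).symm
  have := integral_one_div_le_mul_of_sub_le hμ_pos hμ_cont hμ_mono (hR_pos c hc')
    (hR_anti hs' hc' hs.2.le) (hR s hs' c hc' hs.2.le) hμs.le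
  rw [hγsc]
  linarith

theorem integral_one_div_le_integral_of_sub_le_mul_integral {μ γ R : ℝ → ℝ} {t t₀ : ℝ}
    (htt₀ : t ≤ t₀) (hμ_pos : ∀ x > 0, 0 < μ x) (hμ_cont : ContinuousOn μ (Ioi 0))
    (hμ_mono : MonotoneOn μ (Ioi 0)) (hγ : IntervalIntegrable γ volume t t₀)
    (hR_cont : ContinuousOn R (Icc t t₀)) (hR_pos : ∀ s ∈ Icc t t₀, 0 < R s)
    (hR_anti : AntitoneOn R (Icc t t₀))
    (hR : ∀ a ∈ Icc t t₀, ∀ b ∈ Icc t t₀, a ≤ b → R a - R b ≤ μ (R a) * ∫ s in a..b, γ s) :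
    ∫ x in R t₀..R t, 1 / μ x ≤ ∫ s in t..t₀, γ s := by
  have hlim : Tendsto (fun L : ℝ => L * ∫ s in t..t₀, γ s) (𝓝[>] 1)
      (𝓝 (∫ s in t..t₀, γ s)) := by
    simpa using ((continuous_mul_const (∫ s in t..t₀, γ s)).tendsto 1).mono_left
      nhdsWithin_le_nhds
  exact ge_of_tendsto hlim (eventually_nhdsWithin_of_forall fun L hL =>
    integral_one_div_le_mul_integral_of_sub_le_mul_integral htt₀ hμ_pos hμ_cont hμ_mono hγ
      hR_cont hR_pos hR_anti hR hL)

theorem integral_one_div_le_integral_of_le_add_integral {μ γ ρ : ℝ → ℝ} {t t₀ α : ℝ}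
    (htt₀ : t ≤ t₀) (hμ_pos : ∀ x > 0, 0 < μ x) (hμ_cont : ContinuousOn μ (Ioi 0))
    (hμ_mono : MonotoneOn μ (Ioi 0)) (hγ : IntervalIntegrable γ volume t t₀)
    (hγ_nonneg : ∀ s ∈ Icc t t₀, 0 ≤ γ s) (hρ_pos : ∀ s ∈ Icc t t₀, 0 < ρ s) (hα : 0 < α)
    (hf : IntervalIntegrable (fun s => γ s * μ (ρ s)) volume t t₀)
    (hineq : ∀ s ∈ Icc t t₀, ρ s ≤ α + ∫ u in s..t₀, γ u * μ (ρ u)) :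
    ∫ x in α..α + ∫ u in t..t₀, γ u * μ (ρ u), 1 / μ x ≤ ∫ u in t..t₀, γ u := by
  set R : ℝ → ℝ := fun s => α + ∫ u in s..t₀, γ u * μ (ρ u)
  have ht₀ : t₀ ∈ Icc t t₀ := right_mem_Icc.2 htt₀
  have hsub : ∀ {a b}, a ∈ Icc t t₀ → b ∈ Icc t t₀ → uIcc a b ⊆ uIcc t t₀ := fun ha hb =>
    uIcc_subset_uIcc (Icc_subset_uIcc ha) (Icc_subset_uIcc hb)
  have hR_sub : ∀ a ∈ Icc t t₀, ∀ b ∈ Icc t t₀, R a - R b = ∫ u in a..b, γ u * μ (ρ u) :=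
    fun a ha b hb => by
      have := integral_add_adjacent_intervals (hf.mono_set (hsub ha hb))
        (hf.mono_set (hsub hb ht₀))
      simp only [R]
      linarith
  have hR_anti : AntitoneOn R (Icc t t₀) := fun a ha b hb hab => by
    have := integral_nonneg (μ := volume) hab fun u hau =>
      have hu : u ∈ Icc t t₀ := ⟨ha.1.trans hau.1, hau.2.trans hb.2⟩
      mul_nonneg (hγ_nonneg u hu) (hμ_pos _ (hρ_pos u hu)).le
    linarith [hR_sub a ha b hb]
  have hR_pos : ∀ s ∈ Icc t t₀, 0 < R s := fun s hs =>
    hα.trans_le (by simpa [R] using hR_anti hs ht₀ hs.2)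
  have hR_cont : ContinuousOn R (Icc t t₀) := by
    have h := continuousOn_primitive_interval_left ((intervalIntegrable_iff').1 hf)
    rw [uIcc_of_le htt₀] at h
    exact continuousOn_const.add h
  have hR : ∀ a ∈ Icc t t₀, ∀ b ∈ Icc t t₀, a ≤ b →
      R a - R b ≤ μ (R a) * ∫ s in a..b, γ s := fun a ha b hb hab => by
    rw [hR_sub a ha b hb, ← intervalIntegral.integral_const_mul]
    refine integral_mono_on hab (hf.mono_set (hsub ha hb))
      ((hγ.mono_set (hsub ha hb)).const_mul _) fun u hau => ?_
    have hu : u ∈ Icc t t₀ := ⟨ha.1.trans hau.1, hau.2.trans hb.2⟩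
    have hρR : ρ u ≤ R a := (hineq u hu).trans (hR_anti ha hu hau.1)
    rw [mul_comm]
    exact mul_le_mul_of_nonneg_right (hμ_mono (hρ_pos u hu) (hR_pos a ha) hρR) (hγ_nonneg u hu)
  simpa [R] using integral_one_div_le_integral_of_sub_le_mul_integral htt₀ hμ_pos hμ_cont
    hμ_mono hγ hR_cont hR_pos hR_anti hR

theorem stmt_3_general (t₀ : ℝ)
    (ρ γ : ℝ → ℝ) (μ : ℝ → ℝ)
    (hρ_pos : ∀ t ∈ Set.Icc (0 : ℝ) t₀, 0 < ρ t)
    (hγ_nonneg : ∀ t ∈ Set.Icc (0 : ℝ) t₀, 0 ≤ γ t)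
    (hγ_int : IntegrableOn γ (Set.Icc 0 t₀))
    (hμ_pos : ∀ x > (0 : ℝ), 0 < μ x)
    (hμ_cont : ContinuousOn μ (Set.Ioi 0))
    (hμ_mono : StrictMonoOn μ (Set.Ioi 0))
    (α : ℝ) (hα : 0 < α)
    (hineq : ∀ t ∈ Set.Icc (0 : ℝ) t₀,
      ρ t ≤ α + ∫ s in t..t₀, γ s * μ (ρ s)) :
    ∀ t ∈ Set.Icc (0 : ℝ) t₀,
      -(∫ s in (ρ t)..1, 1 / μ s) + (∫ s in α..1, 1 / μ s) ≤ ∫ s in t..t₀, γ s := by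
  intro t ht
  have hsub : Icc t t₀ ⊆ Icc 0 t₀ := Icc_subset_Icc_left ht.1
  have hγ : IntervalIntegrable γ volume t t₀ :=
    (intervalIntegrable_iff_integrableOn_Icc_of_le ht.2).2 (hγ_int.mono_set hsub)
  have hρ := hρ_pos t ht
  calc -(∫ s in (ρ t)..1, 1 / μ s) + (∫ s in α..1, 1 / μ s) = ∫ s in α..ρ t, 1 / μ s := by
        linarith [integral_add_adjacent_intervals
          (intervalIntegrable_one_div_of_pos hμ_pos hμ_cont hα hρ)
          (intervalIntegrable_one_div_of_pos hμ_pos hμ_cont hρ one_pos)]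
    _ ≤ ∫ s in α..α + ∫ u in t..t₀, γ u * μ (ρ u), 1 / μ s :=
        integral_one_div_mono_right hμ_pos hμ_cont hα hρ (hineq t ht)
    _ ≤ ∫ s in t..t₀, γ s := by
        by_cases hf : IntervalIntegrable (fun s => γ s * μ (ρ s)) volume t t₀
        · exact integral_one_div_le_integral_of_le_add_integral ht.2 hμ_pos hμ_cont
            hμ_mono.monotoneOn hγ (fun s hs => hγ_nonneg s (hsub hs))
            (fun s hs => hρ_pos s (hsub hs)) hα hf (fun s hs => hineq s (hsub hs))
        · rw [integral_undef hf, add_zero, integral_same]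
          exact integral_nonneg ht.2 fun s hs => hγ_nonneg s (hsub hs)

/-- backward-in-time Osgood lemma. -/
theorem stmt_3 (t₀ : ℝ) (ht₀ : 0 < t₀)
    (ρ γ : ℝ → ℝ) (μ : ℝ → ℝ)
    (hρ_meas : Measurable ρ)
    (hρ_pos : ∀ t ∈ Set.Icc (0 : ℝ) t₀, 0 < ρ t)
    (hγ_nonneg : ∀ t ∈ Set.Icc (0 : ℝ) t₀, 0 ≤ γ t)
    (hγ_int : IntegrableOn γ (Set.Icc 0 t₀))
    (hμ_pos : ∀ x > (0 : ℝ), 0 < μ x)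
    (hμ_cont : ContinuousOn μ (Set.Ioi 0))
    (hμ_mono : StrictMonoOn μ (Set.Ioi 0))
    (α : ℝ) (hα : 0 < α)
    (hineq : ∀ t ∈ Set.Icc (0 : ℝ) t₀,
      ρ t ≤ α + ∫ s in t..t₀, γ s * μ (ρ s)) :
    ∀ t ∈ Set.Icc (0 : ℝ) t₀,
      -(∫ s in (ρ t)..1, 1 / μ s) + (∫ s in α..1, 1 / μ s) ≤ ∫ s in t..t₀, γ s :=
  stmt_3_general t₀ ρ γ μ hρ_pos hγ_nonneg hγ_int hμ_pos hμ_cont hμ_mono α hα hineq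
end

section
/- Apply the Osgood lemma with $\mu(x) = x(2 - \ln x)$: if $y : [s,t] \to (0,1)$ satisfies $y(\tau) \le \delta + C \int_\tau^t (2 - \ln y(\sigma)) y(\sigma) d\sigma$ for all $\tau \in [s,t]$, with $0 < \delta < 1$ and $C > 0$, then $y(s) \le \exp\left(2 - 2 e^{-C(t-s)}\right) \delta^{e^{-C(t-s)}}$. -/
/-!
The modulus `μ x = (2 - log x) * x` is monotone on `(0, e]`, and for `δ' > δ` the function
`φ τ = exp (2 - (2 - log δ') * exp (-C * (t - τ)))` satisfies `φ τ = δ' + C ∫_τ^t μ (φ σ) dσ`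
exactly. If `δ + C ∫_τ^t μ (y σ) dσ` reached `φ τ` somewhere in `[s, t]`, then at the last such
time `y < φ` on the rest of the interval, so monotonicity of `μ` bounds the integral for `y` by
the one for `φ`, and `δ < δ'` gives a contradiction. Hence `y s < φ s`, and letting `δ' → δ`
yields the bound; when the bound exceeds `e` there is nothing to prove.
-/

open MeasureTheory intervalIntegral Real Set

theorem lt_of_le_add_integral_of_eq_add_integral {μ : ℝ → ℝ} {D : Set ℝ} (hμ : MonotoneOn μ D)
    {s t δ C : ℝ} (hst : s ≤ t) (hC : 0 ≤ C) {y φ : ℝ → ℝ}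
    (hyD : ∀ τ ∈ Icc s t, y τ ∈ D) (hφD : ∀ τ ∈ Icc s t, φ τ ∈ D)
    (hy_int : IntervalIntegrable (fun σ => μ (y σ)) volume s t)
    (hφ_int : IntervalIntegrable (fun σ => μ (φ σ)) volume s t)
    (hy : ∀ τ ∈ Icc s t, y τ ≤ δ + C * ∫ σ in τ..t, μ (y σ))
    (hφ : ∀ τ ∈ Icc s t, φ τ = φ t + C * ∫ σ in τ..t, μ (φ σ))
    (hδ : δ < φ t) :
    ∀ τ ∈ Icc s t, y τ < φ τ := by
  set gap : ℝ → ℝ := fun τ =>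
    (δ + C * ∫ σ in τ..t, μ (y σ)) - (φ t + C * ∫ σ in τ..t, μ (φ σ))
  have hprim (f : ℝ → ℝ) (hf : IntervalIntegrable f volume s t) :
      ContinuousOn (fun τ => ∫ σ in τ..t, f σ) (Icc s t) := by
    have := continuousOn_primitive_interval_left (μ := volume)
      ((intervalIntegrable_iff_integrableOn_Icc_of_le hst).1 hf |>.mono_set (uIcc_of_le hst).subset)
    rwa [uIcc_of_le hst] at this
  have hgap_cont : ContinuousOn gap (Icc s t) :=
    (continuousOn_const.add (continuousOn_const.mul (hprim _ hy_int))).sub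
      (continuousOn_const.add (continuousOn_const.mul (hprim _ hφ_int)))
  suffices ∀ τ ∈ Icc s t, gap τ < 0 from fun τ hτ => by
    linarith [hy τ hτ, hφ τ hτ, this τ hτ]
  by_contra! hbad
  obtain ⟨τ₀, hτ₀, hτ₀_nonneg⟩ := hbad
  -- the last time in `[s, t]` at which `y` may reach `φ`
  have hclosed : IsClosed (Icc s t ∩ gap ⁻¹' Ici 0) :=
    hgap_cont.preimage_isClosed_of_isClosed isClosed_Icc isClosed_Ici
  obtain ⟨τ, ⟨hτ, hτ_nonneg : 0 ≤ gap τ⟩, hτ_max⟩ :=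
    (isCompact_Icc.of_isClosed_subset hclosed inter_subset_left).exists_isGreatest
      ⟨τ₀, hτ₀, hτ₀_nonneg⟩
  have hτt : τ < t := by
    refine hτ.2.lt_of_ne fun hτt => ?_
    simp only [gap, hτt, integral_same, mul_zero, add_zero] at hτ_nonneg
    linarith
  have hmono : ∫ σ in τ..t, μ (y σ) ≤ ∫ σ in τ..t, μ (φ σ) := by
    have hsub : uIcc τ t ⊆ uIcc s t := uIcc_subset_uIcc_right (Icc_subset_uIcc hτ)
    refine integral_mono_on_of_le_Ioo hτt.le (hy_int.mono_set hsub) (hφ_int.mono_set hsub)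
      fun σ hσ => ?_
    have hσ' : σ ∈ Icc s t := ⟨hτ.1.trans hσ.1.le, hσ.2.le⟩
    have : gap σ < 0 := not_le.1 fun h => (hτ_max ⟨hσ', h⟩).not_gt hσ.1
    exact hμ (hyD σ hσ') (hφD σ hσ') (by linarith [hy σ hσ', hφ σ hσ'])
  have := mul_le_mul_of_nonneg_left hmono hC
  simp only [gap] at hτ_nonneg
  linarith

theorem monotoneOn_two_sub_log_mul : MonotoneOn (fun x => (2 - log x) * x) (Ioc 0 (exp 1)) := by
  have hderiv : ∀ x ≠ 0, HasDerivAt (fun x => (2 - log x) * x) (1 - log x) x := fun x hx => by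
    refine (((hasDerivAt_log hx).const_sub 2).mul (hasDerivAt_id' x)).congr_deriv ?_
    field_simp
    ring
  refine monotoneOn_of_deriv_nonneg (convex_Ioc 0 _)
    (fun x hx => (hderiv x hx.1.ne').continuousAt.continuousWithinAt)
    (fun x hx => (hderiv x (interior_subset hx).1.ne').differentiableAt.differentiableWithinAt)
    fun x hx => ?_
  rw [interior_Ioc] at hx
  rw [(hderiv x hx.1.ne').deriv, sub_nonneg, ← log_exp 1]
  exact log_le_log hx.1 hx.2.le

theorem intervalIntegrable_two_sub_log_mul_comp {s t : ℝ} (hst : s ≤ t) {y : ℝ → ℝ}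
    (hy_meas : Measurable y) (hy : ∀ τ ∈ Icc s t, y τ ∈ Ioc 0 (exp 1)) :
    IntervalIntegrable (fun σ => (2 - log (y σ)) * y σ) volume s t := by
  refine (intervalIntegrable_iff_integrableOn_Icc_of_le hst).2 <|
    Measure.integrableOn_of_bounded (M := exp 1) (by simp [Real.volume_Icc])
      ((measurable_const.sub (measurable_log.comp hy_meas)).mul hy_meas).aestronglyMeasurable ?_
  filter_upwards [ae_restrict_mem measurableSet_Icc] with σ hσ
  have hlog : log (y σ) ≤ 1 := by
    rw [← log_exp 1]; exact log_le_log (hy σ hσ).1 (hy σ hσ).2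
  have hmax := monotoneOn_two_sub_log_mul (hy σ hσ) ⟨exp_pos 1, le_rfl⟩ (hy σ hσ).2
  rw [norm_of_nonneg (mul_nonneg (by linarith) (hy σ hσ).1.le)]
  norm_num at hmax
  exact hmax

/-- The solution of `φ' = -C (2 - log φ) φ` with `2 - log (φ t) = K`: the Osgood inequality
holds with equality for it. -/
noncomputable def osgoodBarrier (C t K τ : ℝ) : ℝ := exp (2 - K * exp (-C * (t - τ)))

section osgoodBarrier

variable (C t K : ℝ)

theorem log_osgoodBarrier (τ : ℝ) : log (osgoodBarrier C t K τ) = 2 - K * exp (-C * (t - τ)) :=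
  log_exp _

theorem osgoodBarrier_self : osgoodBarrier C t K t = exp (2 - K) := by
  simp [osgoodBarrier]

theorem hasDerivAt_osgoodBarrier (τ : ℝ) :
    HasDerivAt (osgoodBarrier C t K)
      (-C * ((2 - log (osgoodBarrier C t K τ)) * osgoodBarrier C t K τ)) τ := by
  have := (((hasDerivAt_id' τ).const_sub t).const_mul (-C)).exp.const_mul K |>.const_sub 2 |>.exp
  refine this.congr_deriv ?_
  rw [log_osgoodBarrier, osgoodBarrier]
  ring

theorem osgoodBarrier_eq_add_integral (τ : ℝ) :
    osgoodBarrier C t K τ = osgoodBarrier C t K t +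
      C * ∫ σ in τ..t, (2 - log (osgoodBarrier C t K σ)) * osgoodBarrier C t K σ := by
  have hcont : Continuous fun σ => (2 - log (osgoodBarrier C t K σ)) * osgoodBarrier C t K σ := by
    simp only [log_osgoodBarrier]
    unfold osgoodBarrier
    fun_prop
  have h := integral_eq_sub_of_hasDerivAt (fun σ _ => hasDerivAt_osgoodBarrier C t K σ)
    ((continuous_const.mul hcont).intervalIntegrable τ t)
  rw [intervalIntegral.integral_const_mul] at h
  linarith

theorem antitone_osgoodBarrier (hC : 0 ≤ C) (hK : 0 ≤ K) : Antitone (osgoodBarrier C t K) :=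
  fun u v huv => by
    refine exp_le_exp.2 (sub_le_sub_left (mul_le_mul_of_nonneg_left (exp_le_exp.2 ?_) hK) 2)
    nlinarith

theorem osgoodBarrier_two_sub_log (τ : ℝ) {δ : ℝ} (hδ : 0 < δ) :
    osgoodBarrier C t (2 - log δ) τ =
      exp (2 - 2 * exp (-C * (t - τ))) * δ ^ exp (-C * (t - τ)) := by
  rw [osgoodBarrier, rpow_def_of_pos hδ, ← exp_add]
  ring_nf

theorem continuous_osgoodBarrier : Continuous (osgoodBarrier C t K) := by
  unfold osgoodBarrier
  fun_prop

end osgoodBarrier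

theorem lt_osgoodBarrier_of_le_add_integral {s t δ δ' C : ℝ} (hst : s ≤ t) (hC : 0 ≤ C)
    {y : ℝ → ℝ} (hy_meas : Measurable y) (hy : ∀ τ ∈ Icc s t, y τ ∈ Ioc 0 (exp 1))
    (hineq : ∀ τ ∈ Icc s t, y τ ≤ δ + C * ∫ σ in τ..t, (2 - log (y σ)) * y σ)
    (hδ' : 0 < δ') (hδδ' : δ < δ') (hbarrier : osgoodBarrier C t (2 - log δ') s ≤ exp 1) :
    y s < osgoodBarrier C t (2 - log δ') s := by
  have hK : 0 ≤ 2 - log δ' := by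
    have := log_le_log (exp_pos _) hbarrier
    rw [log_exp, log_exp] at this
    exact (pos_of_mul_pos_left (by linarith) (exp_pos _).le).le
  have hφ_t : osgoodBarrier C t (2 - log δ') t = δ' := by
    rw [osgoodBarrier_self, sub_sub_cancel, exp_log hδ']
  have hφD : ∀ τ ∈ Icc s t, osgoodBarrier C t (2 - log δ') τ ∈ Ioc 0 (exp 1) := fun τ hτ =>
    ⟨exp_pos _, (antitone_osgoodBarrier C t _ hC hK hτ.1).trans hbarrier⟩
  refine lt_of_le_add_integral_of_eq_add_integral monotoneOn_two_sub_log_mul hst hC hy hφD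
    (intervalIntegrable_two_sub_log_mul_comp hst hy_meas hy)
    (intervalIntegrable_two_sub_log_mul_comp hst (continuous_osgoodBarrier C t _).measurable hφD)
    hineq (fun τ _ => osgoodBarrier_eq_add_integral C t _ τ) (by rwa [hφ_t]) s ⟨le_rfl, hst⟩

open Filter Topology in
/-- Osgood lemma with modulus `μ(x) = x(2 - ln x)`. -/
theorem stmt_4 (s t : ℝ) (hst : s ≤ t) (y : ℝ → ℝ) (hy_meas : Measurable y)
    (hy : ∀ τ ∈ Set.Icc s t, 0 < y τ ∧ y τ < 1)
    (δ C : ℝ) (hδ : δ ∈ Set.Ioo (0 : ℝ) 1) (hC : 0 < C)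
    (hineq : ∀ τ ∈ Set.Icc s t,
      y τ ≤ δ + C * ∫ σ in τ..t, (2 - Real.log (y σ)) * y σ) :
    y s ≤ Real.exp (2 - 2 * Real.exp (-C * (t - s))) * δ ^ Real.exp (-C * (t - s)) := by
  have hy' : ∀ τ ∈ Icc s t, y τ ∈ Ioc 0 (exp 1) := fun τ hτ =>
    ⟨(hy τ hτ).1, (hy τ hτ).2.le.trans (one_le_exp zero_le_one)⟩
  rw [← osgoodBarrier_two_sub_log C t s hδ.1]
  set F : ℝ → ℝ := fun δ' => osgoodBarrier C t (2 - log δ') s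
  by_cases hFδ : exp 1 ≤ F δ
  · exact (hy' s ⟨le_rfl, hst⟩).2.trans hFδ
  have hF : ContinuousAt F δ := by
    unfold F osgoodBarrier
    fun_prop (disch := exact hδ.1.ne')
  have hlt : ∀ᶠ δ' in 𝓝[>] δ, y s < F δ' := by
    filter_upwards [self_mem_nhdsWithin, (hF.eventually (gt_mem_nhds (not_le.1 hFδ))).filter_mono
      nhdsWithin_le_nhds] with δ' hδδ' hFδ'
    exact lt_osgoodBarrier_of_le_add_integral hst hC.le hy_meas hy' hineq
      (hδ.1.trans hδδ') hδδ' hFδ'.le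
  exact ge_of_tendsto (hF.tendsto.mono_left nhdsWithin_le_nhds) (hlt.mono fun _ h => h.le)
end
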